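/- Every well-sorted term is good and every well-sorted abstraction is good: if wls s X then good X, and if wlsAbs (xs,s) A then goodAbs A. -/

import Mathlib

open scoped Classical

universe u

section Binding

variable (var varsort index bindex opsym : Type u)

/-! ### Inputs -/

/-- An `(α,β)`-input: a partial function from `α` to `β`. -/
abbrev Input (α β : Type u) : Type u := α → Option β

/-- The domain of an input. -/
def idom {α β : Type u} (inp : Input α β) : Set α := {a | inp a ≠ none}

/-- The componentwise lifting of a predicate to inputs. -/
def liftP {α β : Type u} (P : β → Prop) (inp : Input α β) : Prop :=
  ∀ a b, inp a = some b → P b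

/-- The componentwise lifting of a function to inputs. -/
def liftF {α β γ : Type u} (f : β → γ) (inp : Input α β) : Input α γ :=
  fun a => (inp a).map f

/-- An input is small if its domain has cardinality smaller than that of `var`. -/
def smallDom {α β : Type u} (inp : Input α β) : Prop :=
  Cardinal.mk (idom inp) < Cardinal.mk var

/-! ### Quasiterms -/

mutual
/-- Quasiterms: raw terms before quotienting by alpha-equivalence. -/
inductive QTerm : Type u where
  | qVar : varsort → var → QTerm
  | qOp : opsym → (index → Option QTerm) → (bindex → Option QAbs) → QTerm
/-- Quasiabstractions. -/
inductive QAbs : Type u where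
  | qAbs : varsort → var → QTerm → QAbs
end

/-- Transposition of two variables. -/
noncomputable def swapVar (z1 z2 x : var) : var :=
  if x = z1 then z2 else if x = z2 then z1 else x

/-- Sort-aware transposition of variables (acts only on variables of varsort `zs`). -/
noncomputable def swapVarS (zs xs : varsort) (z1 z2 x : var) : var :=
  if xs = zs then swapVar var z1 z2 x else x

variable {var varsort index bindex opsym}

/-- Swapping of the variables `z1`, `z2` at varsort `zs` in a quasiterm
(transposing them everywhere, including binding positions). -/
noncomputable def qSwap (z1 z2 : var) (zs : varsort) :
    QTerm var varsort index bindex opsym → QTerm var varsort index bindex opsym :=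
  QTerm.rec (motive_1 := fun _ => QTerm var varsort index bindex opsym)
    (motive_2 := fun _ => QAbs var varsort index bindex opsym)
    (motive_3 := fun _ => Option (QTerm var varsort index bindex opsym))
    (motive_4 := fun _ => Option (QAbs var varsort index bindex opsym))
    (fun xs x => .qVar xs (swapVarS var varsort zs xs z1 z2 x))
    (fun d _ _ rinp rbinp => .qOp d rinp rbinp)
    (fun xs x _ rX => .qAbs xs (swapVarS var varsort zs xs z1 z2 x) rX)
    none (fun _ r => some r) none (fun _ r => some r)

/-- Swapping of variables in a quasiabstraction. -/
noncomputable def qSwapAbs (z1 z2 : var) (zs : varsort) :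
    QAbs var varsort index bindex opsym → QAbs var varsort index bindex opsym
  | .qAbs xs x X => .qAbs xs (swapVarS var varsort zs xs z1 z2 x) (qSwap z1 z2 zs X)

/-! ### Freshness and goodness -/

mutual
/-- `QFresh ys y X`: the variable `y` of varsort `ys` has no free occurrence in `X`. -/
inductive QFresh : varsort → var → QTerm var varsort index bindex opsym → Prop where
  | qVar : ∀ {ys y xs x}, (ys, y) ≠ (xs, x) → QFresh ys y (.qVar xs x)
  | qOp : ∀ {ys y d inp binp}, (∀ i X, inp i = some X → QFresh ys y X) →
      (∀ j A, binp j = some A → QFreshAbs ys y A) → QFresh ys y (.qOp d inp binp)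
/-- Freshness for quasiabstractions. -/
inductive QFreshAbs : varsort → var → QAbs var varsort index bindex opsym → Prop where
  | qAbs_bound : ∀ {xs x X}, QFreshAbs xs x (.qAbs xs x X)
  | qAbs_body : ∀ {ys y xs x X}, QFresh ys y X → QFreshAbs ys y (.qAbs xs x X)
end

mutual
/-- Good quasiterms: all constructors branch less than `|var|`. -/
inductive QGood : QTerm var varsort index bindex opsym → Prop where
  | qVar : ∀ {xs x}, QGood (.qVar xs x)
  | qOp : ∀ {d inp binp}, (∀ i X, inp i = some X → QGood X) →
      (∀ j A, binp j = some A → QGoodAbs A) →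
      smallDom var inp → smallDom var binp → QGood (.qOp d inp binp)
/-- Good quasiabstractions. -/
inductive QGoodAbs : QAbs var varsort index bindex opsym → Prop where
  | qAbs : ∀ {xs x X}, QGood X → QGoodAbs (.qAbs xs x X)
end

/-! ### Alpha-equivalence -/

mutual
/-- Alpha-equivalence of quasiterms. -/
inductive Alpha : QTerm var varsort index bindex opsym →
    QTerm var varsort index bindex opsym → Prop where
  | qVar : ∀ {xs x}, Alpha (.qVar xs x) (.qVar xs x)
  | qOp : ∀ {d inp binp inp' binp'},
      (∀ i, inp i = none ↔ inp' i = none) →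
      (∀ i X X', inp i = some X → inp' i = some X' → Alpha X X') →
      (∀ j, binp j = none ↔ binp' j = none) →
      (∀ j A A', binp j = some A → binp' j = some A' → AlphaAbs A A') →
      Alpha (.qOp d inp binp) (.qOp d inp' binp')
/-- Alpha-equivalence of quasiabstractions (the exists-fresh formulation). -/
inductive AlphaAbs : QAbs var varsort index bindex opsym →
    QAbs var varsort index bindex opsym → Prop where
  | qAbs : ∀ {xs x x' X X' y}, y ∉ ({x, x'} : Set var) →
      QFresh xs y X → QFresh xs y X' →
      Alpha (qSwap y x xs X) (qSwap y x' xs X') →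
      AlphaAbs (.qAbs xs x X) (.qAbs xs x' X')
end

/-! ### Terms and abstractions as quotients -/

variable (var varsort index bindex opsym)

/-- Terms: quasiterms modulo alpha-equivalence. -/
def Term : Type u := Quot (@Alpha var varsort index bindex opsym)

/-- Abstractions: quasiabstractions modulo alpha-equivalence. -/
def Abstr : Type u := Quot (@AlphaAbs var varsort index bindex opsym)

variable {var varsort index bindex opsym}

/-- The projection from quasiterms to terms. -/
def tmk : QTerm var varsort index bindex opsym → Term var varsort index bindex opsym :=
  Quot.mk _

/-- The projection from quasiabstractions to abstractions. -/
def amk : QAbs var varsort index bindex opsym → Abstr var varsort index bindex opsym :=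
  Quot.mk _

/-- A representative of a term. -/
noncomputable def trep (X : Term var varsort index bindex opsym) :
    QTerm var varsort index bindex opsym := Quot.out X

/-- A representative of an abstraction. -/
noncomputable def arep (A : Abstr var varsort index bindex opsym) :
    QAbs var varsort index bindex opsym := Quot.out A

/-- Good terms. -/
def good (X : Term var varsort index bindex opsym) : Prop := QGood (trep X)

/-- Good abstractions. -/
def goodAbs (A : Abstr var varsort index bindex opsym) : Prop := QGoodAbs (arep A)

/-- The variable-injection constructor on terms. -/
def Var (xs : varsort) (x : var) : Term var varsort index bindex opsym :=
  tmk (.qVar xs x)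

/-- The operation constructor on terms. -/
noncomputable def Op (d : opsym) (inp : Input index (Term var varsort index bindex opsym))
    (binp : Input bindex (Abstr var varsort index bindex opsym)) :
    Term var varsort index bindex opsym :=
  tmk (.qOp d (liftF trep inp) (liftF arep binp))

/-- The abstraction constructor. -/
noncomputable def Abs (xs : varsort) (x : var) (X : Term var varsort index bindex opsym) :
    Abstr var varsort index bindex opsym :=
  amk (.qAbs xs x (trep X))

/-- Freshness on terms. -/
def fresh (ys : varsort) (y : var) (X : Term var varsort index bindex opsym) : Prop :=
  QFresh ys y (trep X)

/-- Freshness on abstractions. -/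
def freshAbs (ys : varsort) (y : var) (A : Abstr var varsort index bindex opsym) : Prop :=
  QFreshAbs ys y (arep A)

/-- Swapping on terms. -/
noncomputable def tswap (X : Term var varsort index bindex opsym)
    (z1 z2 : var) (zs : varsort) : Term var varsort index bindex opsym :=
  tmk (qSwap z1 z2 zs (trep X))

/-! ### Substitution -/

mutual
/-- The graph of capture-avoiding substitution on quasiterms:
`QSubst X Y y ys Z` means that `Z` is a result of substituting `Y` for the free
occurrences of the variable `y` of varsort `ys` in `X` (along a capture-free
representative). -/
inductive QSubst : QTerm var varsort index bindex opsym →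
    QTerm var varsort index bindex opsym → var → varsort →
    QTerm var varsort index bindex opsym → Prop where
  | var_eq : ∀ {Y y ys}, QSubst (.qVar ys y) Y y ys Y
  | var_ne : ∀ {Y y ys xs x}, (xs, x) ≠ (ys, y) → QSubst (.qVar xs x) Y y ys (.qVar xs x)
  | op : ∀ {Y y ys d inp binp inp' binp'},
      (∀ i, inp i = none ↔ inp' i = none) →
      (∀ i X X', inp i = some X → inp' i = some X' → QSubst X Y y ys X') →
      (∀ j, binp j = none ↔ binp' j = none) →
      (∀ j A A', binp j = some A → binp' j = some A' → QSubstAbs A Y y ys A') →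
      QSubst (.qOp d inp binp) Y y ys (.qOp d inp' binp')
/-- The graph of capture-avoiding substitution on quasiabstractions. -/
inductive QSubstAbs : QAbs var varsort index bindex opsym →
    QTerm var varsort index bindex opsym → var → varsort →
    QAbs var varsort index bindex opsym → Prop where
  | abs : ∀ {Y y ys xs x X X'}, (xs, x) ≠ (ys, y) → QFresh xs x Y →
      QSubst X Y y ys X' → QSubstAbs (.qAbs xs x X) Y y ys (.qAbs xs x X')
end

/-- The graph of capture-avoiding substitution on terms. -/
def SubstRel (X Y : Term var varsort index bindex opsym) (y : var) (ys : varsort)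
    (Z : Term var varsort index bindex opsym) : Prop :=
  ∃ qX qZ, tmk qX = X ∧ tmk qZ = Z ∧ QSubst qX (trep Y) y ys qZ

/-- Capture-avoiding substitution on terms: `subst X Y y ys` is `X[Y/y]_ys`. -/
noncomputable def subst (X Y : Term var varsort index bindex opsym)
    (y : var) (ys : varsort) : Term var varsort index bindex opsym :=
  if h : ∃ Z, SubstRel X Y y ys Z then h.choose else X

/-- The graph of capture-avoiding substitution on abstractions. -/
def SubstAbsRel (A : Abstr var varsort index bindex opsym)
    (Y : Term var varsort index bindex opsym) (y : var) (ys : varsort)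
    (B : Abstr var varsort index bindex opsym) : Prop :=
  ∃ qA qB, amk qA = A ∧ amk qB = B ∧ QSubstAbs qA (trep Y) y ys qB

/-- Capture-avoiding substitution on abstractions: `substAbs A Y y ys` is `A[Y/y]_ys`. -/
noncomputable def substAbs (A : Abstr var varsort index bindex opsym)
    (Y : Term var varsort index bindex opsym) (y : var) (ys : varsort) :
    Abstr var varsort index bindex opsym :=
  if h : ∃ B, SubstAbsRel A Y y ys B then h.choose else A

/-! ### Parallel substitution -/

mutual
/-- The graph of capture-avoiding parallel substitution on quasiterms, along an
assignment `ρ : varsort → var → Option qterm`. -/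
inductive QPSubst : QTerm var varsort index bindex opsym →
    (varsort → var → Option (QTerm var varsort index bindex opsym)) →
    QTerm var varsort index bindex opsym → Prop where
  | var_some : ∀ {ρ xs x Y}, ρ xs x = some Y → QPSubst (.qVar xs x) ρ Y
  | var_none : ∀ {ρ xs x}, ρ xs x = none → QPSubst (.qVar xs x) ρ (.qVar xs x)
  | op : ∀ {ρ d inp binp inp' binp'},
      (∀ i, inp i = none ↔ inp' i = none) →
      (∀ i X X', inp i = some X → inp' i = some X' → QPSubst X ρ X') →
      (∀ j, binp j = none ↔ binp' j = none) →
      (∀ j A A', binp j = some A → binp' j = some A' → QPSubstAbs A ρ A') →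
      QPSubst (.qOp d inp binp) ρ (.qOp d inp' binp')
/-- The graph of capture-avoiding parallel substitution on quasiabstractions. -/
inductive QPSubstAbs : QAbs var varsort index bindex opsym →
    (varsort → var → Option (QTerm var varsort index bindex opsym)) →
    QAbs var varsort index bindex opsym → Prop where
  | abs : ∀ {ρ xs x X X'}, ρ xs x = none →
      (∀ ys y Y, ρ ys y = some Y → QFresh xs x Y) →
      QPSubst X ρ X' → QPSubstAbs (.qAbs xs x X) ρ (.qAbs xs x X')
end

/-- Turning a term-valued assignment into a quasiterm-valued one, by picking
representatives. -/
noncomputable def qassign (ρ : varsort → var → Option (Term var varsort index bindex opsym)) :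
    varsort → var → Option (QTerm var varsort index bindex opsym) :=
  fun xs x => (ρ xs x).map trep

/-- The graph of parallel substitution on terms. -/
def PSubstRel (X : Term var varsort index bindex opsym)
    (ρ : varsort → var → Option (Term var varsort index bindex opsym))
    (Z : Term var varsort index bindex opsym) : Prop :=
  ∃ qX qZ, tmk qX = X ∧ tmk qZ = Z ∧ QPSubst qX (qassign ρ) qZ

/-- Capture-avoiding parallel substitution on terms: `psubst X ρ` is `X[ρ]`. -/
noncomputable def psubst (X : Term var varsort index bindex opsym)
    (ρ : varsort → var → Option (Term var varsort index bindex opsym)) :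
    Term var varsort index bindex opsym :=
  if h : ∃ Z, PSubstRel X ρ Z then h.choose else X

/-- The graph of parallel substitution on abstractions. -/
def PSubstAbsRel (A : Abstr var varsort index bindex opsym)
    (ρ : varsort → var → Option (Term var varsort index bindex opsym))
    (B : Abstr var varsort index bindex opsym) : Prop :=
  ∃ qA qB, amk qA = A ∧ amk qB = B ∧ QPSubstAbs qA (qassign ρ) qB

/-- Capture-avoiding parallel substitution on abstractions. -/
noncomputable def psubstAbs (A : Abstr var varsort index bindex opsym)
    (ρ : varsort → var → Option (Term var varsort index bindex opsym)) :
    Abstr var varsort index bindex opsym :=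
  if h : ∃ B, PSubstAbsRel A ρ B then h.choose else A

variable (sort : Type u) (asSort : varsort → sort) (stOf : opsym → sort)
  (arOf : opsym → Input index sort) (barOf : opsym → Input bindex (varsort × sort))

mutual
/-- Well-sorted terms over a binding signature. -/
inductive Wls : sort → Term var varsort index bindex opsym → Prop where
  | var : ∀ {xs x}, Wls (asSort xs) (Var xs x)
  | op : ∀ {d inp binp},
      (∀ i, arOf d i = none ↔ inp i = none) →
      (∀ i s X, arOf d i = some s → inp i = some X → Wls s X) →
      (∀ j, barOf d j = none ↔ binp j = none) →
      (∀ j xs s A, barOf d j = some (xs, s) → binp j = some A → WlsAbs (xs, s) A) →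
      Wls (stOf d) (Op d inp binp)
/-- Well-sorted abstractions over a binding signature. -/
inductive WlsAbs : varsort × sort → Abstr var varsort index bindex opsym → Prop where
  | abs : ∀ {xs s x X}, (∃ d j, barOf d j = some (xs, s)) → Wls s X →
      WlsAbs (xs, s) (Abs xs x X)
end

/-!
Swapping preserves goodness of quasiterms, since it does not change the domains of
operation inputs; hence so does alpha-equivalence, and goodness of a term can be read off
any of its representatives. A well-sorted operation term has its inputs indexed by `index`
and `bindex`, so their domains are smaller than `var`.
-/

theorem idom_congr {α β γ : Type u} {inp : Input α β} {inp' : Input α γ}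
    (hdom : ∀ a, inp a = none ↔ inp' a = none) : idom inp = idom inp' :=
  Set.ext fun a => (hdom a).not

theorem smallDom_congr {α β γ : Type u} {inp : Input α β} {inp' : Input α γ}
    (hdom : ∀ a, inp a = none ↔ inp' a = none) : smallDom var inp ↔ smallDom var inp' := by
  rw [smallDom, smallDom, idom_congr hdom]

theorem smallDom_liftF {α β γ : Type u} (f : β → γ) (inp : Input α β) :
    smallDom var (liftF f inp) ↔ smallDom var inp :=
  smallDom_congr fun _ => by simp [liftF]

theorem smallDom_of_mk_lt {α β : Type u} (h : Cardinal.mk α < Cardinal.mk var)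
    (inp : Input α β) : smallDom var inp :=
  (Cardinal.mk_set_le _).trans_lt h

theorem liftP_congr {α β : Type u} {P Q : β → Prop} {inp : Input α β}
    (h : ∀ a b, inp a = some b → (P b ↔ Q b)) : liftP P inp ↔ liftP Q inp :=
  forall_congr' fun a => forall_congr' fun b => imp_congr_right (h a b)

theorem liftP_iff_of_rel {α β γ : Type u} {P : β → Prop} {Q : γ → Prop} {inp : Input α β}
    {inp' : Input α γ} (hdom : ∀ a, inp a = none ↔ inp' a = none)
    (h : ∀ a b c, inp a = some b → inp' a = some c → (P b ↔ Q c)) :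
    liftP P inp ↔ liftP Q inp' := by
  constructor
  · intro hP a c hc
    obtain ⟨b, hb⟩ := Option.ne_none_iff_exists'.mp ((hdom a).not.mpr (by simp [hc]))
    exact (h a b c hb hc).mp (hP a b hb)
  · intro hQ a b hb
    obtain ⟨c, hc⟩ := Option.ne_none_iff_exists'.mp ((hdom a).not.mp (by simp [hb]))
    exact (h a b c hb hc).mpr (hQ a c hc)

theorem liftP_liftF {α β γ : Type u} (P : γ → Prop) (f : β → γ) (inp : Input α β) :
    liftP P (liftF f inp) ↔ liftP (fun b => P (f b)) inp := by
  simp [liftP, liftF]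

theorem liftP_of_rel {α β γ : Type u} {P : β → Prop} {ar : Input α γ} {inp : Input α β}
    (hdom : ∀ a, ar a = none ↔ inp a = none) (h : ∀ a c b, ar a = some c → inp a = some b → P b) :
    liftP P inp := by
  intro a b hb
  obtain ⟨c, hc⟩ := Option.ne_none_iff_exists'.mp ((hdom a).not.mpr (by simp [hb]))
  exact h a c b hc hb

theorem QTerm.induction_mutual {P : QTerm var varsort index bindex opsym → Prop}
    {Q : QAbs var varsort index bindex opsym → Prop}
    (qVar : ∀ xs x, P (.qVar xs x))
    (qOp : ∀ d inp binp, liftP P inp → liftP Q binp → P (.qOp d inp binp))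
    (qAbs : ∀ xs x X, P X → Q (.qAbs xs x X)) :
    (∀ X, P X) ∧ ∀ A, Q A := by
  have some_case {γ : Type u} {R : γ → Prop} (c : γ) (hc : R c) : ∀ c', some c = some c' → R c' :=
    fun _ h => Option.some_inj.mp h ▸ hc
  constructor
  · intro X
    exact QTerm.rec (motive_3 := fun oX => ∀ X, oX = some X → P X)
      (motive_4 := fun oA => ∀ A, oA = some A → Q A) qVar qOp qAbs (by simp) some_case
      (by simp) some_case X
  · intro A
    exact QAbs.rec (motive_1 := P) (motive_3 := fun oX => ∀ X, oX = some X → P X)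
      (motive_4 := fun oA => ∀ A, oA = some A → Q A) qVar qOp qAbs (by simp) some_case
      (by simp) some_case A

theorem qGood_qOp_iff {d : opsym} {inp : Input index (QTerm var varsort index bindex opsym)}
    {binp : Input bindex (QAbs var varsort index bindex opsym)} :
    QGood (.qOp d inp binp) ↔
      liftP QGood inp ∧ liftP QGoodAbs binp ∧ smallDom var inp ∧ smallDom var binp :=
  ⟨fun | .qOp h hb hs hbs => ⟨h, hb, hs, hbs⟩, fun ⟨h, hb, hs, hbs⟩ => .qOp h hb hs hbs⟩

theorem qGoodAbs_qAbs_iff {xs : varsort} {x : var}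
    {X : QTerm var varsort index bindex opsym} : QGoodAbs (.qAbs xs x X) ↔ QGood X :=
  ⟨fun | .qAbs h => h, .qAbs⟩

theorem qSwap_qOp (z1 z2 : var) (zs : varsort) (d : opsym)
    (inp : Input index (QTerm var varsort index bindex opsym))
    (binp : Input bindex (QAbs var varsort index bindex opsym)) :
    qSwap z1 z2 zs (.qOp d inp binp) =
      .qOp d (liftF (qSwap z1 z2 zs) inp) (liftF (qSwapAbs z1 z2 zs) binp) := by
  show QTerm.qOp d _ _ = _
  congr 1
  · funext i
    unfold liftF
    cases inp i <;> rfl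
  · funext j
    unfold liftF
    rcases binp j with _ | ⟨_, _, _⟩ <;> rfl

theorem qGood_qSwap_iff (z1 z2 : var) (zs : varsort)
    (X : QTerm var varsort index bindex opsym) : QGood (qSwap z1 z2 zs X) ↔ QGood X := by
  refine (QTerm.induction_mutual (P := fun X => QGood (qSwap z1 z2 zs X) ↔ QGood X)
    (Q := fun A => QGoodAbs (qSwapAbs z1 z2 zs A) ↔ QGoodAbs A)
    (fun _ _ => ⟨fun _ => .qVar, fun _ => .qVar⟩) ?_ ?_).1 X
  · intro d inp binp ih ihb
    rw [qSwap_qOp, qGood_qOp_iff, qGood_qOp_iff, liftP_liftF, liftP_liftF, liftP_congr ih,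
      liftP_congr ihb, smallDom_liftF, smallDom_liftF]
  · intro xs x X ih
    exact qGoodAbs_qAbs_iff.trans (ih.trans qGoodAbs_qAbs_iff.symm)

theorem qGoodAbs_qAbs_congr_of_qSwap {xs : varsort} {x x' y : var}
    {X X' : QTerm var varsort index bindex opsym}
    (h : QGood (qSwap y x xs X) ↔ QGood (qSwap y x' xs X')) :
    QGoodAbs (.qAbs xs x X) ↔ QGoodAbs (.qAbs xs x' X') := by
  rw [qGoodAbs_qAbs_iff, qGoodAbs_qAbs_iff, ← qGood_qSwap_iff y x xs X, h, qGood_qSwap_iff]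

theorem Alpha.qGood_iff {X X' : QTerm var varsort index bindex opsym} (h : Alpha X X') :
    QGood X ↔ QGood X' := by
  refine Alpha.rec (motive_1 := fun X X' _ => QGood X ↔ QGood X')
    (motive_2 := fun A A' _ => QGoodAbs A ↔ QGoodAbs A') (fun {_ _} => Iff.rfl) ?_
    (fun _ _ _ _ ih => qGoodAbs_qAbs_congr_of_qSwap ih) h
  intro d inp binp inp' binp' hdom _ hbdom _ ih ihb
  rw [qGood_qOp_iff, qGood_qOp_iff, liftP_iff_of_rel hdom ih, liftP_iff_of_rel hbdom ihb,
    smallDom_congr hdom, smallDom_congr hbdom]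

theorem AlphaAbs.qGoodAbs_iff {A A' : QAbs var varsort index bindex opsym}
    (h : AlphaAbs A A') : QGoodAbs A ↔ QGoodAbs A' := by
  obtain ⟨-, -, -, halpha⟩ := h
  exact qGoodAbs_qAbs_congr_of_qSwap halpha.qGood_iff

theorem good_tmk (q : QTerm var varsort index bindex opsym) : good (tmk q) ↔ QGood q :=
  Iff.of_eq <| congrArg (Quot.lift QGood fun _ _ h => propext (Alpha.qGood_iff h))
    (Quot.out_eq (tmk q))

theorem goodAbs_amk (q : QAbs var varsort index bindex opsym) : goodAbs (amk q) ↔ QGoodAbs q :=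
  Iff.of_eq <| congrArg (Quot.lift QGoodAbs fun _ _ h => propext (AlphaAbs.qGoodAbs_iff h))
    (Quot.out_eq (amk q))

theorem good_Var (xs : varsort) (x : var) :
    good (Var xs x : Term var varsort index bindex opsym) :=
  (good_tmk _).mpr .qVar

theorem good_Op_iff {d : opsym} {inp : Input index (Term var varsort index bindex opsym)}
    {binp : Input bindex (Abstr var varsort index bindex opsym)} :
    good (Op d inp binp) ↔
      liftP good inp ∧ liftP goodAbs binp ∧ smallDom var inp ∧ smallDom var binp := by
  rw [Op, good_tmk, qGood_qOp_iff, liftP_liftF, liftP_liftF, smallDom_liftF, smallDom_liftF]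
  rfl

theorem goodAbs_Abs_iff {xs : varsort} {x : var} {X : Term var varsort index bindex opsym} :
    goodAbs (Abs xs x X) ↔ good X :=
  (goodAbs_amk _).trans qGoodAbs_qAbs_iff

theorem Wls.induction_mutual {P : Term var varsort index bindex opsym → Prop}
    {Q : Abstr var varsort index bindex opsym → Prop}
    (hVar : ∀ xs x, P (Var xs x))
    (hOp : ∀ d inp binp, liftP P inp → liftP Q binp → P (Op d inp binp))
    (hAbs : ∀ xs x X, P X → Q (Abs xs x X)) :
    (∀ s X, Wls sort asSort stOf arOf barOf s X → P X) ∧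
      ∀ xs s A, WlsAbs sort asSort stOf arOf barOf (xs, s) A → Q A := by
  have hWls : ∀ s X, Wls sort asSort stOf arOf barOf s X → P X := fun _ _ h =>
    Wls.rec (motive_1 := fun _ X _ => P X) (motive_2 := fun _ A _ => Q A) (hVar _ _)
      (fun hdom _ hbdom _ ih ihb => hOp _ _ _ (liftP_of_rel hdom ih)
        (liftP_of_rel hbdom fun j p A => ihb j p.1 p.2 A))
      (fun _ _ => hAbs _ _ _) h
  refine ⟨hWls, ?_⟩
  rintro xs s A ⟨-, hX⟩
  exact hAbs _ _ _ (hWls _ _ hX)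

/-- every well-sorted term is good and every well-sorted
abstraction is good. -/
theorem wls_good (hinf : Cardinal.aleph0 ≤ Cardinal.mk var)
    (hreg : (Cardinal.mk var).IsRegular)
    (hinj : Function.Injective asSort)
    (hsort : Cardinal.mk sort < Cardinal.mk var)
    (hindex : Cardinal.mk index < Cardinal.mk var)
    (hbindex : Cardinal.mk bindex < Cardinal.mk var) :
    (∀ (s : sort) (X : Term var varsort index bindex opsym),
      Wls sort asSort stOf arOf barOf s X → good X) ∧
    (∀ (xs : varsort) (s : sort) (A : Abstr var varsort index bindex opsym),
      WlsAbs sort asSort stOf arOf barOf (xs, s) A → goodAbs A) :=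
  Wls.induction_mutual sort asSort stOf arOf barOf good_Var
    (fun _ inp binp h hb =>
      good_Op_iff.mpr ⟨h, hb, smallDom_of_mk_lt hindex inp, smallDom_of_mk_lt hbindex binp⟩)
    (fun _ _ _ => goodAbs_Abs_iff.mpr)

end Binding
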